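/- Let α ∈ [0,1] be a real number, let p be a prime and n a positive integer, and let 𝒢 be an elementary abelian p-group of order p^n (i.e., a group of order p^n in which every element g satisfies g^p = identity). Set l = (p^n − 1)/(p − 1). Then αp − 1 is an eigenvalue of A_α(P(𝒢)) whose eigenspace has dimension at least l(p−2), and α + p − 2 is an eigenvalue of A_α(P(𝒢)) whose eigenspace has dimension at least l − 1. -/

import Mathlib

/-!
Every non-identity element of `G` has order `p`, so the non-identity elements fall into `l`
classes of `p - 1` elements (the generators of the `l` subgroups of order `p`); each class is a
clique, distinct classes are non-adjacent and the identity is adjacent to everything, i.e.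
`P(G) = K₁ ∇ l K_{p-1}`. Two generators `x ≠ y` of the same subgroup are adjacent twins, so
`e_x - e_y` is an eigenvector for `α p - 1`, which gives `p - 2` independent eigenvectors per
class. Vectors vanishing at `1`, constant on each class and of total sum zero are eigenvectors for
`α + p - 2`; they form a space of dimension `l - 1`.

Both families are indexed through a chosen generator `zpowersRep x` of each `zpowers x`: the
vectors `e_x - e_{zpowersRep x}` for the non-chosen `x ≠ 1`, and the differences of the indicator
of a class with that of one fixed class. Evaluation at the indices shows they are independent.
-/

open Matrix Polynomial BigOperators

/-- The generalized adjacency matrix `A_α(G) = α·D(G) + (1−α)·A(G)`. -/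
noncomputable def Aalpha {V : Type*} [Fintype V] (G : SimpleGraph V) (α : ℝ) :
    Matrix V V ℝ :=
  letI := Classical.decEq V
  letI := Classical.decRel G.Adj
  α • Matrix.diagonal (fun v => (G.degree v : ℝ)) + (1 - α) • G.adjMatrix ℝ

/-- `μ` is an eigenvalue of the real matrix `M`. -/
def Matrix.IsEigenvalue {n : Type*} [Fintype n] (M : Matrix n n ℝ) (μ : ℝ) : Prop :=
  ∃ v : n → ℝ, v ≠ 0 ∧ M.mulVec v = μ • v

/-- The dimension of the eigenspace of a real matrix `M` for the value `μ`. -/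
noncomputable def eigMult {n : Type*} [Fintype n] (M : Matrix n n ℝ) (μ : ℝ) : ℕ :=
  letI := Classical.decEq n
  Module.finrank ℝ (Module.End.eigenspace (Matrix.toLin' M) μ)

/-- The joined union `G[G_1, …, G_n]`. -/
def joinedUnion {n : ℕ} (G : SimpleGraph (Fin n)) (V : Fin n → Type*)
    (Gs : ∀ i, SimpleGraph (V i)) : SimpleGraph (Σ i, V i) :=
  SimpleGraph.fromRel (fun x y =>
    if h : x.1 = y.1 then (Gs y.1).Adj (h ▸ x.2) y.2 else G.Adj x.1 y.1)

/-- The join `G ∇ H` of two graphs. -/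
def graphJoin {V W : Type*} (G : SimpleGraph V) (H : SimpleGraph W) :
    SimpleGraph (V ⊕ W) :=
  SimpleGraph.fromRel (fun x y =>
    match x, y with
    | Sum.inl a, Sum.inl b => G.Adj a b
    | Sum.inr a, Sum.inr b => H.Adj a b
    | _, _ => True)

/-- The disjoint union `G ∪ H` of two graphs. -/
def disjUnion {V W : Type*} (G : SimpleGraph V) (H : SimpleGraph W) :
    SimpleGraph (V ⊕ W) :=
  SimpleGraph.fromRel (fun x y =>
    match x, y with
    | Sum.inl a, Sum.inl b => G.Adj a b
    | Sum.inr a, Sum.inr b => H.Adj a b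
    | _, _ => False)

/-- Degree of a vertex (classical version). -/
noncomputable def gdegree {V : Type*} [Fintype V] (G : SimpleGraph V) (v : V) : ℕ :=
  letI := Classical.decEq V
  letI := Classical.decRel G.Adj
  G.degree v

/-- The power graph of a group. -/
def powerGraph (G : Type*) [Group G] : SimpleGraph G :=
  SimpleGraph.fromRel (fun x y => ∃ k : ℕ, 0 < k ∧ y = x ^ k)

open Finset Subgroup

theorem LinearIndependent.of_eval_eq_ite {V ι : Type*} [DecidableEq ι] {f : ι → V → ℝ}
    (e : ι → V) (h : ∀ i j, f i (e j) = if j = i then 1 else 0) : LinearIndependent ℝ f := by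
  refine LinearIndependent.of_comp (LinearMap.funLeft ℝ ℝ e) ?_
  convert Pi.linearIndependent_single_one ι ℝ using 1
  ext i j
  simp [LinearMap.funLeft_apply, h, Pi.single_apply]

theorem card_le_eigMult_of_linearIndependent {V ι : Type*} [Fintype V] [Fintype ι]
    {M : Matrix V V ℝ} {μ : ℝ} {f : ι → V → ℝ} (hf : LinearIndependent ℝ f)
    (hev : ∀ i, M *ᵥ f i = μ • f i) :
    Fintype.card ι ≤ eigMult M μ := by
  classical
  have hmem : ∀ i, f i ∈ Module.End.eigenspace (Matrix.toLin' M) μ := fun i => by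
    rw [Module.End.mem_eigenspace_iff, Matrix.toLin'_apply, hev]
  exact (LinearIndependent.of_comp (Submodule.subtype _)
    (v := fun i => (⟨f i, hmem i⟩ : Module.End.eigenspace (Matrix.toLin' M) μ)) hf
    ).fintype_card_le_finrank

namespace SimpleGraph

variable {V : Type*} [Fintype V] (G : SimpleGraph V) [DecidableRel G.Adj]

theorem Aalpha_mulVec_apply (α : ℝ) (f : V → ℝ) (x : V) :
    (Aalpha G α *ᵥ f) x =
      α * G.degree x * f x + (1 - α) * ∑ y ∈ G.neighborFinset x, f y := by
  rw [Aalpha, Matrix.add_mulVec, Matrix.smul_mulVec, Matrix.smul_mulVec]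
  simp only [Pi.add_apply, Pi.smul_apply, Matrix.mulVec_diagonal, adjMatrix_mulVec_apply,
    smul_eq_mul, mul_assoc]
  congr!

theorem degree_eq_of_adj_of_twins {x y : V} (hxy : G.Adj x y)
    (htwin : ∀ z, z ≠ x → z ≠ y → (G.Adj x z ↔ G.Adj y z)) :
    G.degree y = G.degree x := by
  classical
  have hnbhd : (G.neighborFinset x).erase y = (G.neighborFinset y).erase x := by
    ext z
    simp only [mem_erase, mem_neighborFinset]
    by_cases hzx : z = x
    · subst hzx; simp
    · exact ⟨fun ⟨hzy, h⟩ => ⟨hzx, (htwin z hzx hzy).1 h⟩,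
        fun ⟨_, h⟩ => ⟨h.ne.symm, (htwin z hzx h.ne.symm).2 h⟩⟩
  rw [← card_neighborFinset_eq_degree, ← card_neighborFinset_eq_degree,
    ← card_erase_add_one ((mem_neighborFinset _ _ _).2 hxy.symm),
    ← card_erase_add_one ((mem_neighborFinset _ _ _).2 hxy), hnbhd]

theorem Aalpha_mulVec_single_sub_single [DecidableEq V] (α : ℝ) {x y : V} (hxy : G.Adj x y)
    (htwin : ∀ z, z ≠ x → z ≠ y → (G.Adj x z ↔ G.Adj y z)) :
    Aalpha G α *ᵥ (Pi.single x 1 - Pi.single y 1) =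
      (α * (G.degree x + 1) - 1) • (Pi.single x 1 - Pi.single y 1) := by
  ext z
  simp only [Aalpha_mulVec_apply, Pi.sub_apply, sum_sub_distrib, sum_pi_single',
    mem_neighborFinset, Pi.smul_apply, smul_eq_mul]
  by_cases hzx : z = x
  · subst hzx
    simp [hxy, hxy.ne]
    ring
  by_cases hzy : z = y
  · subst hzy
    simp [hxy.symm, hxy.ne', degree_eq_of_adj_of_twins G hxy htwin]
    ring
  simp [hzx, hzy, G.adj_comm z, htwin z hzx hzy]

theorem Aalpha_mulVec_of_universal_vertex (α : ℝ) {u : V} (hu : ∀ x, x ≠ u → G.Adj u x)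
    {k : ℕ} (hdeg : ∀ x, x ≠ u → G.degree x = k) {f : V → ℝ} (hfu : f u = 0)
    (hsum : ∑ x, f x = 0)
    (hf : ∀ x y, x ≠ u → y ≠ u → G.Adj x y → f y = f x) :
    Aalpha G α *ᵥ f = (α + k - 1) • f := by
  classical
  ext x
  rw [Aalpha_mulVec_apply, Pi.smul_apply, smul_eq_mul]
  by_cases hxu : x = u
  · subst hxu
    have hnbhd : G.neighborFinset x = univ.erase x := by
      ext y
      simp only [mem_neighborFinset, mem_erase, mem_univ, and_true]
      exact ⟨fun h => h.ne.symm, hu y⟩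
    rw [hnbhd, sum_erase_eq_sub (mem_univ x), hsum, hfu]
    ring
  have hnbhd : ∑ y ∈ G.neighborFinset x, f y =
      ∑ y ∈ G.neighborFinset x, (f x - if y = u then f x else 0) := by
    refine sum_congr rfl fun y hy => ?_
    by_cases hyu : y = u
    · simp [hyu, hfu]
    · simp [hyu, hf x y hxu hyu ((mem_neighborFinset _ _ _).1 hy)]
  have hux : u ∈ G.neighborFinset x := (mem_neighborFinset _ _ _).2 (hu x hxu).symm
  rw [hnbhd, sum_sub_distrib, sum_const, sum_ite_eq', if_pos hux, card_neighborFinset_eq_degree,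
    hdeg x hxu, nsmul_eq_mul]
  ring

end SimpleGraph

section ZPowersRep

variable {G : Type*} [Group G]

noncomputable def zpowersRep (x : G) : G :=
  Classical.choose (⟨x, rfl⟩ : ∃ y, zpowers y = zpowers x)

theorem zpowers_zpowersRep (x : G) : zpowers (zpowersRep x) = zpowers x :=
  Classical.choose_spec (⟨x, rfl⟩ : ∃ y, zpowers y = zpowers x)

theorem zpowersRep_eq_zpowersRep_iff {x y : G} :
    zpowersRep x = zpowersRep y ↔ zpowers x = zpowers y := by
  refine ⟨fun h => ?_, fun h => by simp only [zpowersRep, h]⟩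
  rw [← zpowers_zpowersRep x, h, zpowers_zpowersRep]

theorem zpowersRep_zpowersRep (x : G) : zpowersRep (zpowersRep x) = zpowersRep x :=
  zpowersRep_eq_zpowersRep_iff.2 (zpowers_zpowersRep x)

theorem zpowersRep_eq_one_iff {x : G} : zpowersRep x = 1 ↔ x = 1 := by
  rw [← zpowers_eq_bot, zpowers_zpowersRep, zpowers_eq_bot]

theorem mem_image_zpowersRep_iff [Fintype G] [DecidableEq G] {r : G} :
    r ∈ (univ.erase 1).image zpowersRep ↔ r ≠ 1 ∧ zpowersRep r = r := by
  simp only [mem_image, mem_erase, mem_univ, and_true]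
  constructor
  · rintro ⟨x, hx, rfl⟩
    exact ⟨zpowersRep_eq_one_iff.not.2 hx, zpowersRep_zpowersRep x⟩
  · rintro ⟨hr, hrr⟩
    exact ⟨r, hr, hrr⟩

end ZPowersRep

section PowerGraph

variable {G : Type*} [Group G] [Finite G] {x y z : G}

theorem powerGraph_adj_iff :
    (powerGraph G).Adj x y ↔ x ≠ y ∧ (y ∈ zpowers x ∨ x ∈ zpowers y) := by
  have hpow : ∀ a b : G, (∃ k : ℕ, 0 < k ∧ b = a ^ k) ↔ b ∈ zpowers a := fun a b => by
    rw [← mem_powers_iff_mem_zpowers, Submonoid.mem_powers_iff]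
    refine ⟨fun ⟨k, _, hk⟩ => ⟨k, hk.symm⟩, fun ⟨k, hk⟩ => ?_⟩
    rcases k.eq_zero_or_pos with rfl | hk0
    · exact ⟨orderOf a, orderOf_pos a, by rw [pow_orderOf_eq_one, ← hk, pow_zero]⟩
    · exact ⟨k, hk0, hk.symm⟩
  rw [powerGraph, SimpleGraph.fromRel_adj, hpow, hpow]

theorem powerGraph_one_adj (hx : x ≠ 1) : (powerGraph G).Adj 1 x :=
  powerGraph_adj_iff.2 ⟨hx.symm, Or.inr (one_mem _)⟩

theorem powerGraph_adj_of_zpowers_eq (h : zpowers x = zpowers y) (hxy : x ≠ y) :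
    (powerGraph G).Adj x y :=
  powerGraph_adj_iff.2 ⟨hxy, Or.inl (h ▸ mem_zpowers y)⟩

theorem powerGraph_adj_iff_adj_of_zpowers_eq (h : zpowers x = zpowers y) (hzx : z ≠ x)
    (hzy : z ≠ y) : (powerGraph G).Adj x z ↔ (powerGraph G).Adj y z := by
  simp only [powerGraph_adj_iff, ← zpowers_le (H := zpowers z), h]
  exact and_congr_left' (iff_of_true hzx.symm hzy.symm)

end PowerGraph

section ElementaryAbelian

variable {G : Type*} [Group G] {p : ℕ} {x y : G}

theorem zpowers_eq_of_mem_of_pow_prime_eq_one [Finite G] (hp : p.Prime)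
    (helem : ∀ g : G, g ^ p = 1) (hx : x ≠ 1) (hy : y ≠ 1) (h : y ∈ zpowers x) :
    zpowers y = zpowers x := by
  have : Fact p.Prime := ⟨hp⟩
  refine eq_of_le_of_card_ge (zpowers_le.2 h) ?_
  rw [Nat.card_zpowers, Nat.card_zpowers, orderOf_eq_prime (helem x) hx,
    orderOf_eq_prime (helem y) hy]

theorem powerGraph_adj_iff_of_pow_prime_eq_one [Finite G] (hp : p.Prime)
    (helem : ∀ g : G, g ^ p = 1) (hx : x ≠ 1) :
    (powerGraph G).Adj x y ↔ y ≠ x ∧ y ∈ zpowers x := by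
  rw [powerGraph_adj_iff, ne_comm]
  refine and_congr_right fun hyx => ⟨fun h => h.elim id fun hxy => ?_, Or.inl⟩
  rcases eq_or_ne y 1 with rfl | hy
  · exact one_mem _
  · exact zpowers_eq_of_mem_of_pow_prime_eq_one hp helem hy hx hxy ▸ mem_zpowers y

variable [Fintype G]

theorem card_filter_mem_zpowers_of_pow_prime_eq_one (hp : p.Prime)
    (helem : ∀ g : G, g ^ p = 1) (hx : x ≠ 1) : #{y | y ∈ zpowers x} = p := by
  have : Fact p.Prime := ⟨hp⟩
  rw [← Fintype.card_subtype, ← Nat.card_eq_fintype_card, Nat.card_zpowers,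
    orderOf_eq_prime (helem x) hx]

theorem powerGraph_degree_of_pow_prime_eq_one [DecidableEq G] [DecidableRel (powerGraph G).Adj]
    (hp : p.Prime) (helem : ∀ g : G, g ^ p = 1) (hx : x ≠ 1) :
    (powerGraph G).degree x = p - 1 := by
  have hnbhd : (powerGraph G).neighborFinset x = ({y | y ∈ zpowers x} : Finset G).erase x := by
    ext y
    simp [powerGraph_adj_iff_of_pow_prime_eq_one hp helem hx]
  rw [← SimpleGraph.card_neighborFinset_eq_degree, hnbhd,
    card_erase_of_mem (by simp [mem_zpowers]),
    card_filter_mem_zpowers_of_pow_prime_eq_one hp helem hx]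

theorem card_filter_zpowersRep_eq [DecidableEq G] (hp : p.Prime) (helem : ∀ g : G, g ^ p = 1)
    (hx : x ≠ 1) :
    #{y | zpowersRep y = zpowersRep x} = p - 1 := by
  have hfiber : ({y | zpowersRep y = zpowersRep x} : Finset G) =
      ({y | y ∈ zpowers x} : Finset G).erase 1 := by
    ext y
    simp only [mem_filter, mem_erase, mem_univ, true_and, zpowersRep_eq_zpowersRep_iff]
    refine ⟨fun h => ⟨fun hy => hx ?_, h ▸ mem_zpowers y⟩, fun ⟨hy, hyx⟩ =>
      zpowers_eq_of_mem_of_pow_prime_eq_one hp helem hx hy hyx⟩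
    rwa [← zpowers_eq_bot, ← h, zpowers_eq_bot]
  rw [hfiber, card_erase_of_mem (by simp [one_mem]),
    card_filter_mem_zpowers_of_pow_prime_eq_one hp helem hx]

theorem card_image_zpowersRep_mul [DecidableEq G] (hp : p.Prime)
    (helem : ∀ g : G, g ^ p = 1) :
    #((univ.erase (1 : G)).image zpowersRep) * (p - 1) = Fintype.card G - 1 := by
  rw [← card_univ, ← card_erase_of_mem (mem_univ 1),
    card_eq_sum_card_image zpowersRep (univ.erase 1)]
  refine (sum_const_nat fun r hr => ?_).symm
  obtain ⟨hr1, hrr⟩ := mem_image_zpowersRep_iff.1 hr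
  have hfiber : (univ.erase 1).filter (zpowersRep · = r) =
      ({y | zpowersRep y = zpowersRep r} : Finset G) := by
    ext y
    simp only [mem_filter, mem_erase, mem_univ, and_true, true_and, hrr]
    exact and_iff_right_of_imp fun h hy => hr1 (h ▸ zpowersRep_eq_one_iff.2 hy)
  rw [hfiber, card_filter_zpowersRep_eq hp helem hr1]

end ElementaryAbelian

section Eigenvectors

variable {G : Type*} [Group G] [Fintype G] [DecidableEq G] {p : ℕ}

theorem card_erase_one_sdiff_image_zpowersRep_le_eigMult (hp : p.Prime)
    (helem : ∀ g : G, g ^ p = 1) (α : ℝ) :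
    #((univ.erase 1) \ (univ.erase (1 : G)).image zpowersRep) ≤
      eigMult (Aalpha (powerGraph G) α) (α * p - 1) := by
  classical
  set N := (univ.erase 1) \ (univ.erase (1 : G)).image zpowersRep
  have hN : ∀ x ∈ N, x ≠ 1 ∧ zpowersRep x ≠ x := fun x hx => by
    simp only [N, mem_sdiff, mem_erase, mem_univ, and_true, mem_image_zpowersRep_iff] at hx
    exact ⟨hx.1, fun h => hx.2 ⟨hx.1, h⟩⟩
  rw [← Fintype.card_coe]
  refine card_le_eigMult_of_linearIndependent
    (f := fun x : N => Pi.single (x : G) 1 - Pi.single (zpowersRep (x : G)) 1) ?_ fun x => ?_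
  · refine LinearIndependent.of_eval_eq_ite (fun x : N => (x : G)) fun x y => ?_
    have hy : (y : G) ≠ zpowersRep (x : G) := fun h =>
      (hN y y.2).2 (h ▸ zpowersRep_zpowersRep (x : G))
    simp only [Pi.sub_apply, Pi.single_apply, hy, if_false, sub_zero, Subtype.ext_iff]
  · obtain ⟨hx1, hxr⟩ := hN x x.2
    have hz : zpowers (x : G) = zpowers (zpowersRep (x : G)) := (zpowers_zpowersRep _).symm
    convert SimpleGraph.Aalpha_mulVec_single_sub_single _ α
      (powerGraph_adj_of_zpowers_eq hz (Ne.symm hxr))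
      (fun z => powerGraph_adj_iff_adj_of_zpowers_eq hz) using 2
    rw [powerGraph_degree_of_pow_prime_eq_one hp helem hx1, Nat.cast_sub hp.one_le]
    ring

theorem card_image_zpowersRep_sub_one_le_eigMult (hp : p.Prime)
    (helem : ∀ g : G, g ^ p = 1) (α : ℝ) :
    #((univ.erase (1 : G)).image zpowersRep) - 1 ≤
      eigMult (Aalpha (powerGraph G) α) (α + p - 2) := by
  classical
  set R := (univ.erase (1 : G)).image zpowersRep
  rcases R.eq_empty_or_nonempty with hempty | ⟨r₀, hr₀⟩
  · simp [hempty]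
  have hR : ∀ r ∈ R, r ≠ 1 ∧ zpowersRep r = r := fun r => mem_image_zpowersRep_iff.1
  have hfiber : ∀ r ∈ R, #{y | zpowersRep y = r} = p - 1 := fun r hr => by
    conv_lhs => rw [← (hR r hr).2]
    exact card_filter_zpowersRep_eq hp helem (hR r hr).1
  rw [← card_erase_of_mem hr₀, ← Fintype.card_coe]
  let f : R.erase r₀ → G → ℝ := fun r y =>
    (if zpowersRep y = r then 1 else 0) - (if zpowersRep y = r₀ then 1 else 0)
  refine card_le_eigMult_of_linearIndependent (f := f) ?_ fun r => ?_
  · refine LinearIndependent.of_eval_eq_ite (fun r => (r : G)) fun r s => ?_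
    obtain ⟨hsr₀, hs⟩ := mem_erase.1 s.2
    simp only [f, (hR s hs).2, hsr₀, if_false, sub_zero, Subtype.ext_iff]
  · obtain ⟨hr₁, hr⟩ := mem_erase.1 r.2
    have hev := SimpleGraph.Aalpha_mulVec_of_universal_vertex (powerGraph G) α (u := 1)
      (fun x => powerGraph_one_adj) (k := p - 1)
      (fun x hx => powerGraph_degree_of_pow_prime_eq_one hp helem hx) (f := f r) ?_ ?_ ?_
    · rw [hev, Nat.cast_sub hp.one_le]
      congr 1
      ring
    · simp [f, zpowersRep_eq_one_iff.2 rfl, Ne.symm (hR r hr).1, Ne.symm (hR r₀ hr₀).1]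
    · simp [f, sum_sub_distrib, sum_boole, hfiber r hr, hfiber r₀ hr₀]
    · intro x y hx hy hxy
      have h := zpowers_eq_of_mem_of_pow_prime_eq_one hp helem hx hy
        ((powerGraph_adj_iff_of_pow_prime_eq_one hp helem hx).1 hxy).2
      simp [f, zpowersRep_eq_zpowersRep_iff.2 h]

end Eigenvectors

theorem stmt_16_general {α : ℝ}
    (p n : ℕ) (hp : p.Prime)
    (G : Type) [CommGroup G] [Fintype G]
    (hcard : Fintype.card G = p ^ n) (helem : ∀ g : G, g ^ p = 1)
    (l : ℕ) (hl : l = (p ^ n - 1) / (p - 1)) :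
    l * (p - 2) ≤ eigMult (Aalpha (powerGraph G) α) (α * (p : ℝ) - 1) ∧
    l - 1 ≤ eigMult (Aalpha (powerGraph G) α) (α + (p : ℝ) - 2) := by
  classical
  set R := (univ.erase (1 : G)).image zpowersRep
  have hcount : #R * (p - 1) = p ^ n - 1 := hcard ▸ card_image_zpowersRep_mul hp helem
  have hR : #R = l := by
    rw [hl, ← hcount, Nat.mul_div_cancel _ (Nat.sub_pos_of_lt hp.one_lt)]
  have hN : #((univ.erase 1) \ R) = l * (p - 2) := by
    have hsub : R ⊆ univ.erase 1 := fun r hr =>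
      mem_erase.2 ⟨(mem_image_zpowersRep_iff.1 hr).1, mem_univ r⟩
    rw [card_sdiff_of_subset hsub, card_erase_of_mem (mem_univ 1), card_univ, hcard, ← hcount,
      hR, show p - 1 = (p - 2) + 1 by have := hp.two_le; omega, mul_add_one, Nat.add_sub_cancel]
  exact ⟨hN ▸ card_erase_one_sdiff_image_zpowersRep_le_eigMult hp helem α,
    hR ▸ card_image_zpowersRep_sub_one_le_eigMult hp helem α⟩

/-- eigenvalues of the power graph of an elementary abelian
`p`-group of order `p^n`. -/
theorem stmt_16 {α : ℝ} (hα : α ∈ Set.Icc (0 : ℝ) 1)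
    (p n : ℕ) (hp : p.Prime) (hn : 1 ≤ n)
    (G : Type) [CommGroup G] [Fintype G]
    (hcard : Fintype.card G = p ^ n) (helem : ∀ g : G, g ^ p = 1)
    (l : ℕ) (hl : l = (p ^ n - 1) / (p - 1)) :
    l * (p - 2) ≤ eigMult (Aalpha (powerGraph G) α) (α * (p : ℝ) - 1) ∧
    l - 1 ≤ eigMult (Aalpha (powerGraph G) α) (α + (p : ℝ) - 2) :=
  stmt_16_general p n hp G hcard helem l hl
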